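/- arXiv:2303.03237 — 3 statements merged into one kernel-verified Lean document; each statement's English description precedes it below -/
import Mathlib

section
/- Let d ≥ 1, X = [0,1]^d, and let f : X → ℝ be continuous with ‖f‖_∞ ≤ log(3/2) and L_f = 0. Define f̃ : X → ℝ by f̃(x) := log(2·exp(f(x)) − 1). Then Z_{f̃} = 1 and P_f = (1/2)·P_{f̃} + (1/2)·U, where U is the uniform distribution (Lebesgue measure) on X; that is, the two-component mixture of the Gibbs measure of f̃ and the uniform distribution with equal weights reproduces P_f exactly. -/
open MeasureTheory Real

noncomputable section

/-- The unit cube `[0,1]^d` in `ℝ^d`. -/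
def cube (d : ℕ) : Set (Fin d → ℝ) := Set.Icc 0 1

/-- The partition function `Z_f = ∫_X exp(f(x)) dx`. -/
def partZ {d : ℕ} (f : (Fin d → ℝ) → ℝ) : ℝ := ∫ x in cube d, Real.exp (f x)

/-- The log-partition function `L_f = log Z_f`. -/
def logPart {d : ℕ} (f : (Fin d → ℝ) → ℝ) : ℝ := Real.log (partZ f)

/-- The Gibbs measure `P_f` with density `exp(f(x))/Z_f` w.r.t. Lebesgue measure on the cube. -/
def gibbs {d : ℕ} (f : (Fin d → ℝ) → ℝ) : Measure (Fin d → ℝ) :=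
  (volume.restrict (cube d)).withDensity fun x => ENNReal.ofReal (Real.exp (f x) / partZ f)

/-- Essential supremum norm `‖h‖_∞` over the cube. -/
def supNormOn {d : ℕ} (h : (Fin d → ℝ) → ℝ) : ℝ :=
  essSup (fun x => |h x|) (volume.restrict (cube d))

/-- Total variation distance between two measures: `sup_A |P(A) − Q(A)|`. -/
def DTV {α : Type*} [MeasurableSpace α] (P Q : Measure α) : ℝ :=
  ⨆ A : {A : Set α // MeasurableSet A}, |(P A.1).toReal - (Q A.1).toReal|

/-- `f` is bounded on the cube. -/
def BddOnCube {d : ℕ} (f : (Fin d → ℝ) → ℝ) : Prop := ∃ C, ∀ x ∈ cube d, |f x| ≤ C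

/-! Writing `p = exp f`, the density of `P_f` splits pointwise as `p = ½ (2p - 1) + ½`. The bound
`|f| ≤ log (3/2)` keeps `2p - 1` positive, so it is the density `exp f̃` of a measure, whose total
mass is `2 Z_f - 1 = 1`. -/

theorem withDensity_ofReal_eq_half_smul_add {α : Type*} [MeasurableSpace α] {μ : Measure α}
    {p : α → ℝ} (hp : ∀ᵐ x ∂μ, 1 ≤ 2 * p x) :
    μ.withDensity (fun x => ENNReal.ofReal (p x)) =
      (2⁻¹ : ENNReal) • μ.withDensity (fun x => ENNReal.ofReal (2 * p x - 1))
        + (2⁻¹ : ENNReal) • μ := by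
  have hsplit : (fun x => ENNReal.ofReal (p x)) =ᵐ[μ]
      (2⁻¹ : ENNReal) • (fun x => ENNReal.ofReal (2 * p x - 1)) + fun _ => 2⁻¹ := by
    filter_upwards [hp] with x hx
    rw [Pi.add_apply, Pi.smul_apply, smul_eq_mul, ← ENNReal.ofReal_ofNat 2,
      ← ENNReal.ofReal_inv_of_pos two_pos, ← ENNReal.ofReal_mul (by norm_num),
      ← ENNReal.ofReal_add (by nlinarith) (by norm_num)]
    congr 1
    ring
  rw [withDensity_congr_ae hsplit, withDensity_add_right _ measurable_const,
    withDensity_smul' _ _ (by simp), withDensity_const]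

theorem measurableSet_cube (d : ℕ) : MeasurableSet (cube d) := measurableSet_Icc

theorem volume_cube (d : ℕ) : volume (cube d) = 1 := by
  simp [cube, Real.volume_Icc_pi]

theorem partZ_pos {d : ℕ} {f : (Fin d → ℝ) → ℝ}
    (hf : IntegrableOn (fun x => exp (f x)) (cube d)) : 0 < partZ f := by
  have : NeZero (volume.restrict (cube d)) :=
    ⟨by simp [Measure.restrict_eq_zero, volume_cube]⟩
  exact integral_exp_pos hf

theorem partZ_log_two_mul_exp_sub_one {d : ℕ} {f : (Fin d → ℝ) → ℝ}
    (hf : IntegrableOn (fun x => exp (f x)) (cube d))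
    (hpos : ∀ x ∈ cube d, 1 < 2 * exp (f x)) :
    partZ (fun x => log (2 * exp (f x) - 1)) = 2 * partZ f - 1 := by
  have hvol : volume.real (cube d) = 1 := by simp [measureReal_def, volume_cube]
  rw [partZ, setIntegral_congr_fun (measurableSet_cube d) fun x hx => exp_log (by linarith [hpos x hx]),
    integral_sub (hf.const_mul 2) (integrableOn_const (by simp [volume_cube])),
    integral_const_mul, setIntegral_const, hvol, partZ, smul_eq_mul, mul_one]

theorem one_lt_two_mul_exp_of_abs_le_log {y : ℝ} (hy : |y| ≤ log (3 / 2)) : 1 < 2 * exp y := by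
  have hlog : log (2 / 3) ≤ y := by
    rw [show (2 / 3 : ℝ) = (3 / 2)⁻¹ by norm_num, log_inv]
    exact neg_le_of_abs_le hy
  have : (2 / 3 : ℝ) ≤ exp y := by
    simpa [exp_log (show (0 : ℝ) < 2 / 3 by norm_num)] using exp_le_exp.mpr hlog
  linarith

theorem exact_sampling_mixture_general (d : ℕ) (f : (Fin d → ℝ) → ℝ)
    (hcont : ContinuousOn f (cube d))
    (hbdd : ∀ x ∈ cube d, |f x| ≤ Real.log (3 / 2))
    (hL : logPart f = 0) :
    partZ (fun x => Real.log (2 * Real.exp (f x) - 1)) = 1 ∧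
    gibbs f = (2⁻¹ : ENNReal) • gibbs (fun x => Real.log (2 * Real.exp (f x) - 1))
        + (2⁻¹ : ENNReal) • volume.restrict (cube d) := by
  have hint : IntegrableOn (fun x => exp (f x)) (cube d) :=
    (continuous_exp.comp_continuousOn hcont).integrableOn_compact isCompact_Icc
  have hpos : ∀ x ∈ cube d, 1 < 2 * exp (f x) := fun x hx =>
    one_lt_two_mul_exp_of_abs_le_log (hbdd x hx)
  have hZ : partZ f = 1 := eq_one_of_pos_of_log_eq_zero (partZ_pos hint) hL
  have hZt : partZ (fun x => log (2 * exp (f x) - 1)) = 1 := by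
    rw [partZ_log_two_mul_exp_sub_one hint hpos, hZ]
    norm_num
  refine ⟨hZt, ?_⟩
  have hcube : ∀ᵐ x ∂volume.restrict (cube d), x ∈ cube d := ae_restrict_mem (measurableSet_cube d)
  rw [gibbs, gibbs, hZ, hZt]
  simp only [div_one]
  rw [withDensity_ofReal_eq_half_smul_add (hcube.mono fun x hx => (hpos x hx).le)]
  congr 2
  refine withDensity_congr_ae (hcube.mono fun x hx => ?_)
  dsimp only
  rw [exp_log (by linarith [hpos x hx])]

/-- Proposition 2.13, exact sampling construction.
For continuous `f` on `X = [0,1]^d` with `‖f‖_∞ ≤ log(3/2)` and `L_f = 0`, the function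
`f̃(x) := log(2 e^{f(x)} − 1)` satisfies `Z_{f̃} = 1` and
`P_f = (1/2) P_{f̃} + (1/2) U` with `U` the uniform distribution on `X`. -/
theorem exact_sampling_mixture (d : ℕ) (hd : 1 ≤ d) (f : (Fin d → ℝ) → ℝ)
    (hcont : ContinuousOn f (cube d))
    (hbdd : ∀ x ∈ cube d, |f x| ≤ Real.log (3 / 2))
    (hL : logPart f = 0) :
    partZ (fun x => Real.log (2 * Real.exp (f x) - 1)) = 1 ∧
    gibbs f = (2⁻¹ : ENNReal) • gibbs (fun x => Real.log (2 * Real.exp (f x) - 1))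
        + (2⁻¹ : ENNReal) • volume.restrict (cube d) :=
  exact_sampling_mixture_general d f hcont hbdd hL
end
end

section
/- Let d ≥ 1, X = [0,1]^d, and let p, q : X → [0,∞) be bounded and measurable with I_p := ∫_X p(x) dx > 0 and I_q := ∫_X q(x) dx > 0. Let P and Q be the probability measures with densities p/I_p and q/I_q respectively. Then: (i) if ‖p − q‖_∞ < I_p, then |log I_p − log I_q| ≤ log( 1 / (1 − ‖p − q‖_∞ / I_p) ); (ii) D_TV(P, Q) ≤ 3·‖p − q‖_∞ / max{I_p, I_q}. -/
/-!
Since the cube has unit volume, `|I_p - I_q| ≤ ∫ |p - q| ≤ ‖p - q‖_∞ =: ε`, and (i) is this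
bound seen through the logarithm. For (ii), writing
`p / I_p - q / I_q = (p - q) / I_p + q (I_q - I_p) / (I_p I_q)` gives
`∫ |p / I_p - q / I_q| ≤ 2ε / I_p`, and symmetrically `≤ 2ε / I_q`; the total variation distance
of two densities is at most the `L¹` distance between them.
-/

open MeasureTheory Real

noncomputable section

section NormalizedDensities

variable {α : Type*} [MeasurableSpace α] {μ : Measure α} {f g : α → ℝ} {a b : ℝ}

theorem integral_abs_div_sub_div_le (hf : Integrable f μ) (hg : Integrable g μ)
    (hg0 : 0 ≤ᵐ[μ] g) (hfa : ∫ x, f x ∂μ = a) (hgb : ∫ x, g x ∂μ = b) (ha : 0 < a) (hb : 0 < b) :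
    ∫ x, |f x / a - g x / b| ∂μ ≤ 2 * (∫ x, |f x - g x| ∂μ) / a := by
  have hab : |a - b| ≤ ∫ x, |f x - g x| ∂μ := by
    rw [← hfa, ← hgb, ← integral_sub hf hg]
    exact abs_integral_le_integral_abs
  have hpointwise : ∀ᵐ x ∂μ, |f x / a - g x / b| ≤ |f x - g x| / a + g x * |b - a| / (a * b) := by
    filter_upwards [hg0] with x hgx
    have hsplit : f x / a - g x / b = (f x - g x) / a + g x * (b - a) / (a * b) := by
      field_simp; ring
    rw [hsplit]
    refine (abs_add_le _ _).trans_eq ?_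
    rw [abs_div, abs_div, abs_mul, abs_of_pos ha, abs_of_pos (mul_pos ha hb), abs_of_nonneg hgx]
  have hint₁ : Integrable (fun x => |f x - g x| / a) μ := (hf.sub hg).abs.div_const a
  have hint₂ : Integrable (fun x => g x * |b - a| / (a * b)) μ := (hg.mul_const _).div_const _
  calc ∫ x, |f x / a - g x / b| ∂μ
      ≤ ∫ x, (|f x - g x| / a + g x * |b - a| / (a * b)) ∂μ :=
        integral_mono_ae ((hf.div_const a).sub (hg.div_const b)).abs (hint₁.add hint₂) hpointwise
    _ = (∫ x, |f x - g x| ∂μ + |a - b|) / a := by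
        rw [integral_add hint₁ hint₂, integral_div, integral_div, integral_mul_const, hgb,
          abs_sub_comm]
        field_simp
    _ ≤ 2 * (∫ x, |f x - g x| ∂μ) / a := by gcongr; linarith

theorem integral_abs_div_sub_div_le_max (hf : Integrable f μ) (hg : Integrable g μ)
    (hf0 : 0 ≤ᵐ[μ] f) (hg0 : 0 ≤ᵐ[μ] g) (hfa : ∫ x, f x ∂μ = a) (hgb : ∫ x, g x ∂μ = b)
    (ha : 0 < a) (hb : 0 < b) :
    ∫ x, |f x / a - g x / b| ∂μ ≤ 2 * (∫ x, |f x - g x| ∂μ) / max a b := by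
  rcases le_total a b with h | h
  · rw [max_eq_right h]
    simp_rw [abs_sub_comm (f _ / a), abs_sub_comm (f _)]
    exact integral_abs_div_sub_div_le hg hf hf0 hgb hfa hb ha
  · rw [max_eq_left h]
    exact integral_abs_div_sub_div_le hf hg hg0 hfa hgb ha hb

theorem toReal_withDensity_ofReal_apply (hf : Integrable f μ) (hf0 : 0 ≤ᵐ[μ] f) {A : Set α}
    (hA : MeasurableSet A) :
    ((μ.withDensity fun x => ENNReal.ofReal (f x)) A).toReal = ∫ x in A, f x ∂μ := by
  rw [withDensity_apply _ hA,
    ← ofReal_integral_eq_lintegral_ofReal hf.restrict (ae_restrict_of_ae hf0)]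
  exact ENNReal.toReal_ofReal (integral_nonneg_of_ae (ae_restrict_of_ae hf0))

theorem DTV_withDensity_le_integral_abs_sub (hf : Integrable f μ) (hg : Integrable g μ)
    (hf0 : 0 ≤ᵐ[μ] f) (hg0 : 0 ≤ᵐ[μ] g) :
    DTV (μ.withDensity fun x => ENNReal.ofReal (f x))
        (μ.withDensity fun x => ENNReal.ofReal (g x)) ≤ ∫ x, |f x - g x| ∂μ := by
  have : Nonempty {A : Set α // MeasurableSet A} := ⟨⟨∅, MeasurableSet.empty⟩⟩
  refine ciSup_le fun ⟨A, hA⟩ => ?_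
  rw [toReal_withDensity_ofReal_apply hf hf0 hA, toReal_withDensity_ofReal_apply hg hg0 hA,
    ← integral_sub hf.restrict hg.restrict]
  exact abs_integral_le_integral_abs.trans
    (setIntegral_le_integral (hf.sub hg).abs (Filter.Eventually.of_forall fun _ => abs_nonneg _))

end NormalizedDensities

theorem abs_log_sub_log_le_log_one_div {a b ε : ℝ} (ha : 0 < a) (hb : 0 < b) (hab : |a - b| ≤ ε)
    (hεa : ε < a) : |log a - log b| ≤ log (1 / (1 - ε / a)) := by
  have hgap : 0 < a - ε := by linarith
  have hab' := abs_le.mp hab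
  rw [show 1 / (1 - ε / a) = a / (a - ε) by field_simp, abs_sub_le_iff, ← log_div ha.ne' hb.ne',
    ← log_div hb.ne' ha.ne']
  constructor
  · apply log_le_log (div_pos ha hb)
    rw [div_le_div_iff₀ hb hgap]
    nlinarith
  · apply log_le_log (div_pos hb ha)
    rw [div_le_div_iff₀ ha hgap]
    nlinarith [mul_le_mul_of_nonneg_right (show b ≤ a + ε by linarith) hgap.le]

section Cube

variable {d : ℕ} {f g : (Fin d → ℝ) → ℝ}

instance isProbabilityMeasure_restrict_cube (d : ℕ) :
    IsProbabilityMeasure (volume.restrict (cube d)) :=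
  ⟨by simp [cube, Real.volume_Icc_pi]⟩

theorem BddOnCube.integrable (hf : BddOnCube f) (hm : Measurable f) :
    Integrable f (volume.restrict (cube d)) := by
  obtain ⟨C, hC⟩ := hf
  refine (integrable_const C).mono' hm.aestronglyMeasurable ?_
  filter_upwards [ae_restrict_mem measurableSet_Icc] with x hx
  exact hC x hx

theorem BddOnCube.sub (hf : BddOnCube f) (hg : BddOnCube g) : BddOnCube fun x => f x - g x := by
  obtain ⟨C, hC⟩ := hf
  obtain ⟨D, hD⟩ := hg
  exact ⟨C + D, fun x hx => (abs_sub _ _).trans (add_le_add (hC x hx) (hD x hx))⟩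

theorem BddOnCube.ae_abs_le_supNormOn (hf : BddOnCube f) :
    ∀ᵐ x ∂(volume.restrict (cube d)), |f x| ≤ supNormOn f := by
  obtain ⟨C, hC⟩ := hf
  refine ae_le_essSup ⟨C, ?_⟩
  rw [Filter.eventually_map]
  filter_upwards [ae_restrict_mem measurableSet_Icc] with x hx
  exact hC x hx

theorem BddOnCube.integral_abs_le_supNormOn (hf : BddOnCube f) :
    ∫ x in cube d, |f x| ≤ supNormOn f := by
  have h := norm_integral_le_of_norm_le_const (μ := volume.restrict (cube d))
    (f := fun x => |f x|) (by simpa using hf.ae_abs_le_supNormOn)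
  simpa using (le_abs_self _).trans h

end Cube

theorem density_approximation_bounds_general (d : ℕ)
    (p q : (Fin d → ℝ) → ℝ)
    (hpm : Measurable p) (hqm : Measurable q)
    (hp0 : ∀ x, 0 ≤ p x) (hq0 : ∀ x, 0 ≤ q x)
    (hpb : BddOnCube p) (hqb : BddOnCube q)
    (Ip Iq : ℝ) (hIp : Ip = ∫ x in cube d, p x) (hIq : Iq = ∫ x in cube d, q x)
    (hIp0 : 0 < Ip) (hIq0 : 0 < Iq)
    (P Q : Measure (Fin d → ℝ))
    (hP : P = (volume.restrict (cube d)).withDensity fun x => ENNReal.ofReal (p x / Ip))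
    (hQ : Q = (volume.restrict (cube d)).withDensity fun x => ENNReal.ofReal (q x / Iq)) :
    (supNormOn (fun x => p x - q x) < Ip →
      |Real.log Ip - Real.log Iq| ≤ Real.log (1 / (1 - supNormOn (fun x => p x - q x) / Ip))) ∧
    DTV P Q ≤ 3 * supNormOn (fun x => p x - q x) / max Ip Iq := by
  set ε := supNormOn fun x => p x - q x
  have hpi := hpb.integrable hpm
  have hqi := hqb.integrable hqm
  have hL1 : ∫ x in cube d, |p x - q x| ≤ ε := (hpb.sub hqb).integral_abs_le_supNormOn
  have hIpq : |Ip - Iq| ≤ ε := by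
    rw [hIp, hIq, ← integral_sub hpi hqi]
    exact abs_integral_le_integral_abs.trans hL1
  refine ⟨abs_log_sub_log_le_log_one_div hIp0 hIq0 hIpq, ?_⟩
  have hp0' : 0 ≤ᵐ[volume.restrict (cube d)] p := Filter.Eventually.of_forall hp0
  have hq0' : 0 ≤ᵐ[volume.restrict (cube d)] q := Filter.Eventually.of_forall hq0
  subst hP hQ
  calc DTV _ _ ≤ ∫ x in cube d, |p x / Ip - q x / Iq| :=
        DTV_withDensity_le_integral_abs_sub (hpi.div_const Ip) (hqi.div_const Iq)
          (hp0'.mono fun _ hx => div_nonneg hx hIp0.le)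
          (hq0'.mono fun _ hx => div_nonneg hx hIq0.le)
    _ ≤ 2 * (∫ x in cube d, |p x - q x|) / max Ip Iq :=
        integral_abs_div_sub_div_le_max hpi hqi hp0' hq0' hIp.symm hIq.symm hIp0 hIq0
    _ ≤ 3 * ε / max Ip Iq := by
        have : 0 ≤ ∫ x in cube d, |p x - q x| := integral_nonneg fun _ => abs_nonneg _
        gcongr
        linarith

/-- Proposition 4.1, density approximation bounds.
For bounded measurable `p, q : X → [0,∞)` with `I_p = ∫ p > 0`, `I_q = ∫ q > 0`, and `P, Q`
the probability measures with densities `p/I_p`, `q/I_q`: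
(i) if `‖p − q‖_∞ < I_p` then `|log I_p − log I_q| ≤ log(1/(1 − ‖p − q‖_∞/I_p))`;
(ii) `D_TV(P, Q) ≤ 3 ‖p − q‖_∞ / max{I_p, I_q}`. -/
theorem density_approximation_bounds (d : ℕ) (hd : 1 ≤ d)
    (p q : (Fin d → ℝ) → ℝ)
    (hpm : Measurable p) (hqm : Measurable q)
    (hp0 : ∀ x, 0 ≤ p x) (hq0 : ∀ x, 0 ≤ q x)
    (hpb : BddOnCube p) (hqb : BddOnCube q)
    (Ip Iq : ℝ) (hIp : Ip = ∫ x in cube d, p x) (hIq : Iq = ∫ x in cube d, q x)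
    (hIp0 : 0 < Ip) (hIq0 : 0 < Iq)
    (P Q : Measure (Fin d → ℝ))
    (hP : P = (volume.restrict (cube d)).withDensity fun x => ENNReal.ofReal (p x / Ip))
    (hQ : Q = (volume.restrict (cube d)).withDensity fun x => ENNReal.ofReal (q x / Iq)) :
    (supNormOn (fun x => p x - q x) < Ip →
      |Real.log Ip - Real.log Iq| ≤ Real.log (1 / (1 - supNormOn (fun x => p x - q x) / Ip))) ∧
    DTV P Q ≤ 3 * supNormOn (fun x => p x - q x) / max Ip Iq :=
  density_approximation_bounds_general d p q hpm hqm hp0 hq0 hpb hqb Ip Iq hIp hIq hIp0 hIq0 P Q hP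
    hQ
end
end

section
/- Let d ≥ 1, N ≥ 1, and let φ : [0,1]^d → ℂ^N be continuous. Let n := dim_ℂ span_ℂ{ φ(x)φ(x)* : x ∈ [0,1]^d } ⊆ ℂ^{N×N}. Then there exist a point z ∈ [0,1]^d and a probability measure Q̃ on [0,1]^d whose moment matrix matches that of the uniform distribution, i.e., ∫ φ(x)φ(x)* dQ̃(x) = ∫_{[0,1]^d} φ(x)φ(x)* dx, such that for the function f(x) := Σ_{i=1}^d cos(2π(x_i − z_i)), for every β > 0 and every bounded measurable g : [0,1]^d → ℝ: log( ∫ exp(g(x)) dQ̃(x) ) − log( ∫_{[0,1]^d} exp(β·f(x)) dx ) ≥ log( β^{d/2} / (2n+1) ) − ‖g − β·f‖_∞. In particular, any moment-matrix-based relaxation whose value upper-bounds sup over moment-matched measures Q̃ of log ∫ e^g dQ̃ must overestimate the log-partition function L_{βf} by at least log(β^{d/2}/(2n+1)) − ‖g − βf‖_∞. -/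
open MeasureTheory Real

noncomputable section

/-- The rank-one "outer product" feature matrix `φ(x) φ(x)^* ∈ ℂ^{N×N}`. -/
def outerFeat {d N : ℕ} (φ : (Fin d → ℝ) → (Fin N → ℂ)) (x : Fin d → ℝ) :
    Matrix (Fin N) (Fin N) ℂ :=
  Matrix.of fun i j => φ x i * (starRingEnd ℂ) (φ x j)


/-!
The uniform moment matrix `∫ φφ*` is the barycenter of the compact set `{φ(x)φ(x)* : x ∈ [0,1]^d}`,
which spans a real space of dimension `2n`; by Carathéodory it is a convex combination of at most
`2n + 1` of these matrices, and the corresponding atomic measure `Q̃` matches the moments. Its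
heaviest atom `z` has weight at least `1/(2n+1)`, and centring `f` at `z` makes `f(z) = d`, so
`log ∫ e^g dQ̃ ≥ -log(2n+1) + βd - ‖g - βf‖_∞`. On the other side `cos(2πt) ≤ 1 - 8t²` for
`|t| ≤ 1/2`, and a Gaussian integral bounds each one-dimensional factor of `∫ e^{βf}` by `e^β/√β`.
-/

universe u

section Caratheodory

variable {E : Type u} [AddCommGroup E] [Module ℝ E] [FiniteDimensional ℝ E]

theorem exists_convexCombination_card_le_finrank_succ {K : Set E} (V : Submodule ℝ E)
    (hKV : K ⊆ V) {x : E} (hx : x ∈ convexHull ℝ K) :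
    ∃ (ι : Type u) (_ : Fintype ι) (z : ι → E) (w : ι → ℝ), Set.range z ⊆ K ∧
      (∀ i, 0 < w i) ∧ ∑ i, w i = 1 ∧ ∑ i, w i • z i = x ∧
      Fintype.card ι ≤ Module.finrank ℝ V + 1 := by
  obtain ⟨ι, _, z, w, hzK, hz, hw, hw1, hx⟩ := eq_pos_convex_span_of_mem_convexHull hx
  refine ⟨ι, _, z, w, hzK, hw, hw1, hx, ?_⟩
  let zV : ι → V := fun i => ⟨z i, hKV (hzK ⟨i, rfl⟩)⟩
  have hzV : AffineIndependent ℝ zV := hz.of_comp V.subtype.toAffineMap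
  exact hzV.card_le_finrank_succ.trans (Nat.succ_le_succ (Submodule.finrank_le _))

end Caratheodory

section ConvexHull

variable {E : Type u} [NormedAddCommGroup E] [NormedSpace ℝ E] [FiniteDimensional ℝ E]

theorem IsCompact.convexHull {K : Set E} (hK : IsCompact K) : IsCompact (convexHull ℝ K) := by
  let combine (m : ℕ) (p : (Fin m → ℝ) × (Fin m → E)) : E := ∑ j, p.1 j • p.2 j
  have hK_eq : _root_.convexHull ℝ K = ⋃ m ∈ Finset.range (Module.finrank ℝ E + 2),
      combine m '' (stdSimplex ℝ (Fin m) ×ˢ Set.univ.pi fun _ => K) := by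
    refine subset_antisymm (fun x hx => ?_) (Set.iUnion₂_subset fun m _ => ?_)
    · obtain ⟨ι, _, z, w, hzK, hw, hw1, rfl, hcard⟩ :=
        exists_convexCombination_card_le_finrank_succ ⊤ (fun _ _ => trivial) hx
      rw [finrank_top] at hcard
      let e := Fintype.equivFin ι
      refine Set.mem_iUnion₂.2 ⟨Fintype.card ι, Finset.mem_range.2 (by omega),
        (w ∘ e.symm, z ∘ e.symm), ⟨⟨fun j => (hw _).le, ?_⟩, fun j _ => hzK ⟨_, rfl⟩⟩, ?_⟩
      · exact (e.symm.sum_comp w).trans hw1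
      · exact e.symm.sum_comp fun i => w i • z i
    · rintro _ ⟨⟨w, v⟩, ⟨⟨hw0, hw1⟩, hv⟩, rfl⟩
      exact (convex_convexHull ℝ K).sum_mem (fun j _ => hw0 j) hw1
        (fun j _ => subset_convexHull ℝ K (hv j (Set.mem_univ j)))
  rw [hK_eq]
  exact (Finset.range _).isCompact_biUnion fun m _ =>
    ((isCompact_stdSimplex _ _).prod (isCompact_univ_pi fun _ => hK)).image (by fun_prop)

theorem exists_convexCombination_eq_integral {α : Type*} [MeasurableSpace α] (μ : Measure α)
    [IsProbabilityMeasure μ] {F : α → E} {s : Set α} (hs : ∀ᵐ x ∂μ, x ∈ s)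
    (hFs : IsCompact (F '' s)) (hF : Integrable F μ) (V : Submodule ℝ E) (hV : F '' s ⊆ V) :
    ∃ (ι : Type u) (_ : Fintype ι) (p : ι → α) (w : ι → ℝ), (∀ i, p i ∈ s) ∧
      (∀ i, 0 < w i) ∧ ∑ i, w i = 1 ∧ ∑ i, w i • F (p i) = ∫ x, F x ∂μ ∧
      Fintype.card ι ≤ Module.finrank ℝ V + 1 := by
  have hmem : ∫ x, F x ∂μ ∈ convexHull ℝ (F '' s) :=
    (convex_convexHull ℝ _).integral_mem hFs.convexHull.isClosed
      (hs.mono fun x hx => subset_convexHull ℝ _ (Set.mem_image_of_mem F hx)) hF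
  obtain ⟨ι, _, z, w, hz, hw, hw1, hsum, hcard⟩ :=
    exists_convexCombination_card_le_finrank_succ V hV hmem
  choose p hp hpz using fun i => hz (Set.mem_range_self i)
  exact ⟨ι, _, p, w, hp, hw, hw1, by simpa only [hpz] using hsum, hcard⟩

end ConvexHull

section WeightedDirac

variable {α ι : Type*} [MeasurableSpace α] [Fintype ι]

def weightedDirac (w : ι → ℝ) (p : ι → α) : Measure α :=
  ∑ i, ENNReal.ofReal (w i) • Measure.dirac (p i)

variable {w : ι → ℝ} {p : ι → α}

theorem integral_weightedDirac [MeasurableSingletonClass α] {E : Type*} [NormedAddCommGroup E]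
    [NormedSpace ℝ E] [CompleteSpace E] (hw : ∀ i, 0 ≤ w i) (f : α → E) :
    ∫ x, f x ∂weightedDirac w p = ∑ i, w i • f (p i) := by
  rw [weightedDirac, integral_finsetSum_measure fun i _ =>
    (integrable_dirac enorm_lt_top).smul_measure ENNReal.ofReal_ne_top]
  simp only [integral_smul_measure, integral_dirac, ENNReal.toReal_ofReal (hw _)]

theorem isProbabilityMeasure_weightedDirac (hw : ∀ i, 0 ≤ w i) (hw1 : ∑ i, w i = 1) :
    IsProbabilityMeasure (weightedDirac w p) := by
  constructor
  simp only [weightedDirac, Measure.finsetSum_apply, Measure.smul_apply, measure_univ,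
    smul_eq_mul, mul_one]
  rw [← ENNReal.ofReal_sum_of_nonneg fun i _ => hw i, hw1, ENNReal.ofReal_one]

theorem weightedDirac_compl_eq_zero [MeasurableSingletonClass α] {s : Set α} (hp : ∀ i, p i ∈ s) :
    weightedDirac w p sᶜ = 0 := by
  simp [weightedDirac, Measure.dirac_apply, hp]

theorem log_weight_add_le_log_integral_exp [MeasurableSingletonClass α] (hw : ∀ i, 0 ≤ w i)
    (g : α → ℝ) {i : ι} (hwi : 0 < w i) :
    log (w i) + g (p i) ≤ log (∫ x, exp (g x) ∂weightedDirac w p) := by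
  rw [integral_weightedDirac hw, ← log_exp (g (p i)), ← log_mul hwi.ne' (exp_pos _).ne']
  refine log_le_log (by positivity) ?_
  exact Finset.single_le_sum (f := fun j => w j • exp (g (p j)))
    (fun j _ => smul_nonneg (hw j) (exp_pos _).le) (Finset.mem_univ i)

end WeightedDirac

theorem exists_inv_le_of_sum_eq_one {ι : Type*} [Fintype ι] {w : ι → ℝ} (hw1 : ∑ i, w i = 1)
    {m : ℕ} (hm : Fintype.card ι ≤ m) : ∃ i, (m : ℝ)⁻¹ ≤ w i := by
  have hι : (Finset.univ : Finset ι).Nonempty := by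
    by_contra h
    simp_all [Finset.not_nonempty_iff_eq_empty]
  have hm_pos : (0 : ℝ) < m := by
    exact_mod_cast hι.card_pos.trans_le hm
  obtain ⟨i, -, hi⟩ := Finset.exists_le_of_sum_le hι (f := fun _ => (m : ℝ)⁻¹) (g := w) (by
    rw [hw1, Finset.sum_const, Finset.card_univ, nsmul_eq_mul, ← div_eq_mul_inv,
      div_le_one hm_pos]
    exact_mod_cast hm)
  exact ⟨i, hi⟩

theorem abs_sub_le_ciSup_abs_sub {X : Type*} {s : Set X} {g h : X → ℝ}
    (hg : ∃ C, ∀ x, |g x| ≤ C) (hh : ∃ C, ∀ x, |h x| ≤ C) {z : X} (hz : z ∈ s) :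
    |g z - h z| ≤ ⨆ x : s, |g x - h x| := by
  obtain ⟨C, hC⟩ := hg
  obtain ⟨D, hD⟩ := hh
  refine le_ciSup (f := fun x : s => |g x - h x|) ⟨C + D, ?_⟩ ⟨z, hz⟩
  rintro _ ⟨x, rfl⟩
  exact (abs_sub _ _).trans (add_le_add (hC x) (hD x))

theorem integral_apply_apply {α m n E : Type*} [MeasurableSpace α] {μ : Measure α} [Fintype m]
    [Fintype n] [NormedAddCommGroup E] [NormedSpace ℝ E] [CompleteSpace E] {f : α → m → n → E}
    (hf : Integrable f μ) (i : m) (j : n) : (∫ x, f x ∂μ) i j = ∫ x, f x i j ∂μ := by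
  let L : (m → n → E) →L[ℝ] E :=
    (ContinuousLinearMap.proj (φ := fun _ => E) j).comp (ContinuousLinearMap.proj i)
  exact (L.integral_comp_comm hf).symm

theorem Submodule.finrank_restrictScalars_real {E : Type*} [AddCommGroup E] [Module ℂ E]
    [Module ℝ E] [IsScalarTower ℝ ℂ E] (S : Submodule ℂ E) :
    Module.finrank ℝ (S.restrictScalars ℝ) = 2 * Module.finrank ℂ S := by
  rw [((S.restrictScalarsEquiv ℝ ℂ E).restrictScalars ℝ).finrank_eq,
    ← Module.finrank_mul_finrank ℝ ℂ S, Complex.finrank_real_complex]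

theorem abs_mul_sum_cos_le {d : ℕ} (β : ℝ) (θ : Fin d → ℝ) : |β * ∑ i, cos (θ i)| ≤ |β| * d := by
  rw [abs_mul]
  gcongr
  simpa using (Finset.abs_sum_le_sum_abs _ Finset.univ).trans
    (Finset.sum_le_sum fun i _ => abs_cos_le_one (θ i))

theorem intervalIntegral_exp_neg_mul_sq_le {c : ℝ} (hc : 0 < c) {a b : ℝ} (hab : a ≤ b) :
    ∫ t in a..b, exp (-c * t ^ 2) ≤ √(π / c) := by
  rw [intervalIntegral.integral_of_le hab, ← integral_gaussian c]
  exact setIntegral_le_integral (integrable_exp_neg_mul_sq hc)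
    (Filter.Eventually.of_forall fun _ => (exp_pos _).le)

theorem cos_two_pi_mul_le {t : ℝ} (ht : |t| ≤ 1 / 2) : cos (2 * π * t) ≤ 1 - 8 * t ^ 2 := by
  have h := cos_le_one_sub_mul_cos_sq (x := 2 * π * t)
    (by rw [abs_mul, abs_of_pos (by positivity)]; nlinarith [pi_pos])
  calc cos (2 * π * t) ≤ 1 - 2 / π ^ 2 * (2 * π * t) ^ 2 := h
    _ = 1 - 8 * t ^ 2 := by field_simp; ring

theorem integral_Icc_exp_mul_cos_le {β : ℝ} (hβ : 0 < β) (c : ℝ) :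
    ∫ t in Set.Icc (0 : ℝ) 1, exp (β * cos (2 * π * (t - c))) ≤ exp β / √β := by
  let h : ℝ → ℝ := fun t => exp (β * cos (2 * π * t))
  have h_periodic : Function.Periodic h 1 := fun t => by
    simp only [h, mul_add, mul_one, cos_add_two_pi]
  have h_le : ∀ t ∈ Set.Icc (-(1 / 2) : ℝ) (-(1 / 2) + 1),
      h t ≤ exp β * exp (-(8 * β) * t ^ 2) := fun t ht => by
    have hcos := cos_two_pi_mul_le (abs_le.2 ⟨ht.1, by linarith [ht.2]⟩)
    rw [← exp_add]
    exact exp_le_exp.2 (by nlinarith)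
  calc ∫ t in Set.Icc (0 : ℝ) 1, exp (β * cos (2 * π * (t - c)))
      = ∫ t in (-c)..(-c + 1), h t := by
        rw [integral_Icc_eq_integral_Ioc, ← intervalIntegral.integral_of_le zero_le_one,
          intervalIntegral.integral_comp_sub_right (fun t => h t)]
        ring_nf
    _ = ∫ t in (-(1 / 2))..(-(1 / 2) + 1), h t := h_periodic.intervalIntegral_add_eq _ _
    _ ≤ ∫ t in (-(1 / 2))..(-(1 / 2) + 1), exp β * exp (-(8 * β) * t ^ 2) :=
        intervalIntegral.integral_mono_on (by norm_num)
          ((by fun_prop : Continuous h).intervalIntegrable _ _)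
          ((by fun_prop : Continuous fun t : ℝ => exp β * exp (-(8 * β) * t ^ 2)).intervalIntegrable
            _ _) h_le
    _ ≤ exp β * √(π / (8 * β)) := by
        rw [intervalIntegral.integral_const_mul]
        gcongr
        exact intervalIntegral_exp_neg_mul_sq_le (by positivity) (by norm_num)
    _ ≤ exp β / √β := by
        rw [div_eq_mul_inv (exp β), ← sqrt_inv]
        gcongr
        rw [div_le_iff₀ (by positivity), inv_mul_eq_div, mul_div_assoc, div_self hβ.ne']
        linarith [pi_le_four]

theorem isCompact_cube (d : ℕ) : IsCompact (cube d) := isCompact_Icc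

theorem integral_cube_prod (d : ℕ) (f : Fin d → ℝ → ℝ) :
    ∫ x in cube d, ∏ i, f i (x i) = ∏ i, ∫ t in Set.Icc (0 : ℝ) 1, f i t := by
  rw [cube, ← Set.pi_univ_Icc, volume_pi, Measure.restrict_pi_pi]
  exact integral_fintype_prod_eq_prod f

instance isProbabilityMeasure_volume_restrict_cube (d : ℕ) :
    IsProbabilityMeasure (volume.restrict (cube d)) :=
  ⟨by simp [cube, Real.volume_Icc_pi]⟩

theorem log_integral_cube_exp_mul_sum_cos_le {d : ℕ} {β : ℝ} (hβ : 0 < β) (z : Fin d → ℝ) :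
    log (∫ x in cube d, exp (β * ∑ i, cos (2 * π * (x i - z i)))) ≤ d * (β - log β / 2) := by
  have h_prod : ∫ x in cube d, exp (β * ∑ i, cos (2 * π * (x i - z i)))
      = ∏ i, ∫ t in Set.Icc (0 : ℝ) 1, exp (β * cos (2 * π * (t - z i))) := by
    simp_rw [Finset.mul_sum, exp_sum]
    exact integral_cube_prod d fun i t => exp (β * cos (2 * π * (t - z i)))
  have h_pos : 0 < ∫ x in cube d, exp (β * ∑ i, cos (2 * π * (x i - z i))) :=
    integral_exp_pos ((by fun_prop : Continuous _).continuousOn.integrableOn_compact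
      (isCompact_cube d))
  have h_le : ∫ x in cube d, exp (β * ∑ i, cos (2 * π * (x i - z i))) ≤ (exp β / √β) ^ d := by
    rw [h_prod, ← Fin.prod_const]
    exact Finset.prod_le_prod
      (fun i _ => setIntegral_nonneg measurableSet_Icc fun _ _ => (exp_pos _).le)
      fun i _ => integral_Icc_exp_mul_cos_le hβ (z i)
  calc log (∫ x in cube d, exp (β * ∑ i, cos (2 * π * (x i - z i))))
      ≤ log ((exp β / √β) ^ d) := log_le_log h_pos h_le
    _ = d * (β - log β / 2) := by
      rw [log_pow, log_div (exp_ne_zero _) (sqrt_pos.2 hβ).ne', log_exp, log_sqrt hβ.le]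

theorem continuous_outerFeat {d N : ℕ} {φ : (Fin d → ℝ) → (Fin N → ℂ)} (hφ : Continuous φ) :
    Continuous (fun x => outerFeat φ x : (Fin d → ℝ) → Fin N → Fin N → ℂ) :=
  continuous_pi fun i => continuous_pi fun j => by
    simp only [outerFeat, Matrix.of_apply]
    fun_prop

theorem lopt_relaxation_lower_bound_general (d N : ℕ)
    (φ : (Fin d → ℝ) → (Fin N → ℂ)) (hφ : Continuous φ)
    (n : ℕ) (hn : n = Module.finrank ℂ (Submodule.span ℂ (outerFeat φ '' cube d))) :
    ∃ z ∈ cube d, ∃ Qt : Measure (Fin d → ℝ),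
      IsProbabilityMeasure Qt ∧ Qt (cube d)ᶜ = 0 ∧
      (∀ i j : Fin N,
        (∫ x, outerFeat φ x i j ∂Qt) = ∫ x in cube d, outerFeat φ x i j) ∧
      (∀ β : ℝ, 0 < β → ∀ g : (Fin d → ℝ) → ℝ, Measurable g → (∃ C, ∀ x, |g x| ≤ C) →
        Real.log (β ^ ((d : ℝ) / 2) / (2 * n + 1))
            - (⨆ x : cube d, |g x.1 - β * ∑ i, Real.cos (2 * Real.pi * (x.1 i - z i))|) ≤
          Real.log (∫ x, Real.exp (g x) ∂Qt)
            - Real.log (∫ x in cube d,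
                Real.exp (β * ∑ i, Real.cos (2 * Real.pi * (x i - z i))))) := by
  let F : (Fin d → ℝ) → Fin N → Fin N → ℂ := fun x => outerFeat φ x
  have hF : Continuous F := continuous_outerFeat hφ
  have hF_int : IntegrableOn F (cube d) := hF.continuousOn.integrableOn_compact (isCompact_cube d)
  let V := (Submodule.span ℂ (F '' cube d)).restrictScalars ℝ
  have hV : Module.finrank ℝ V = 2 * n := by
    rw [hn, Submodule.finrank_restrictScalars_real]
    -- `Matrix (Fin N) (Fin N) ℂ` and `Fin N → Fin N → ℂ` carry the same `ℂ`-module structure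
    rfl
  obtain ⟨ι, _, p, w, hp, hw, hw1, hbary, hcard⟩ :=
    exists_convexCombination_eq_integral (volume.restrict (cube d))
      (ae_restrict_mem measurableSet_Icc) ((isCompact_cube d).image hF) hF_int V
      Submodule.subset_span
  obtain ⟨i₀, hi₀⟩ := exists_inv_le_of_sum_eq_one hw1 (hcard.trans_eq (by rw [hV]))
  have hw0 : ∀ i, 0 ≤ w i := fun i => (hw i).le
  refine ⟨p i₀, hp i₀, weightedDirac w p, isProbabilityMeasure_weightedDirac hw0 hw1,
    weightedDirac_compl_eq_zero hp, fun i j => ?_, fun β hβ g _ hg => ?_⟩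
  · rw [integral_weightedDirac hw0, ← integral_apply_apply hF_int, ← hbary]
    simp only [F, Finset.sum_apply]
    exact Finset.sum_congr rfl fun k _ => Complex.real_smul.symm
  · have h_atom := log_weight_add_le_log_integral_exp (p := p) hw0 g (hw i₀)
    have h_sup := abs_sub_le_ciSup_abs_sub (h := fun x => β * ∑ i, cos (2 * π * (x i - p i₀ i)))
      hg ⟨|β| * d, fun x => abs_mul_sum_cos_le β _⟩ (hp i₀)
    have h_partition := log_integral_cube_exp_mul_sum_cos_le hβ (p i₀)
    have h_weight : -log (2 * n + 1) ≤ log (w i₀) := by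
      rw [← log_inv]
      exact log_le_log (by positivity) (by exact_mod_cast hi₀)
    simp only [sub_self, mul_zero, cos_zero, Finset.sum_const, Finset.card_univ, Fintype.card_fin,
      nsmul_eq_mul, mul_one] at h_sup
    rw [log_div (by positivity) (by positivity), log_rpow hβ]
    linarith [(abs_le.1 h_sup).1]

/-- Theorem 4.9, lower bound for the OPT relaxation.
Let `φ : [0,1]^d → ℂ^N` be continuous and let `n` be the complex dimension of
`span{φ(x)φ(x)^* : x ∈ [0,1]^d}`. Then there exist `z ∈ [0,1]^d` and a probability measure
`Q̃` on `[0,1]^d` whose moment matrix matches that of the uniform distribution, such that for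
`f(x) = ∑_i cos(2π(x_i − z_i))`, every `β > 0`, and every bounded measurable `g`:
`log(∫ e^g dQ̃) − L_{βf} ≥ log(β^{d/2}/(2n+1)) − ‖g − βf‖_∞`. -/
theorem lopt_relaxation_lower_bound (d N : ℕ) (hd : 1 ≤ d) (hN : 1 ≤ N)
    (φ : (Fin d → ℝ) → (Fin N → ℂ)) (hφ : Continuous φ)
    (n : ℕ) (hn : n = Module.finrank ℂ (Submodule.span ℂ (outerFeat φ '' cube d))) :
    ∃ z ∈ cube d, ∃ Qt : Measure (Fin d → ℝ),
      IsProbabilityMeasure Qt ∧ Qt (cube d)ᶜ = 0 ∧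
      (∀ i j : Fin N,
        (∫ x, outerFeat φ x i j ∂Qt) = ∫ x in cube d, outerFeat φ x i j) ∧
      (∀ β : ℝ, 0 < β → ∀ g : (Fin d → ℝ) → ℝ, Measurable g → (∃ C, ∀ x, |g x| ≤ C) →
        Real.log (β ^ ((d : ℝ) / 2) / (2 * n + 1))
            - (⨆ x : cube d, |g x.1 - β * ∑ i, Real.cos (2 * Real.pi * (x.1 i - z i))|) ≤
          Real.log (∫ x, Real.exp (g x) ∂Qt)
            - Real.log (∫ x in cube d,
                Real.exp (β * ∑ i, Real.cos (2 * Real.pi * (x i - z i))))) :=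
  lopt_relaxation_lower_bound_general d N φ hφ n hn
end
end
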